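/- arXiv:2210.08056 — 3 statements merged into one kernel-verified Lean document; each statement's English description precedes it below -/
import Mathlib

section
/- In the root system of type $A_{\ell+m+n-1}$ with simple roots $\alpha_1,\ldots,\alpha_{\ell+m+n-1}$ (for integers $\ell,m,n \ge 1$), let $\Theta = \Sigma \setminus \{\alpha_\ell, \alpha_{\ell+m}\}$ and $\delta_P = \sum_{\gamma\in\Pi^+\setminus\langle\Theta\rangle^+}\gamma$. Then $\langle\delta_P, h_{\alpha_\ell}^\vee\rangle = \ell + m$ and $\langle\delta_P, h_{\alpha_{\ell+m}}^\vee\rangle = m + n$. -/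
open Finset
open scoped Classical

noncomputable section

/-- `i`-th standard basis vector of `ℚ^k`. -/
def E (k : ℕ) (i : Fin k) : Fin k → ℚ := fun j => if j = i then 1 else 0

/-- The Euclidean inner product on `ℚ^k`. -/
def dot {k : ℕ} (v w : Fin k → ℚ) : ℚ := ∑ i, v i * w i

/-- The pairing `⟨β, h_γ^∨⟩ = 2(β,γ)/(γ,γ)` of `β` with the coroot of `γ`. -/
def pairing {k : ℕ} (β γ : Fin k → ℚ) : ℚ := 2 * dot β γ / dot γ γ

/-- The set `⟨Θ⟩⁺` of positive roots that are integral combinations of elements of `Θ`. -/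
def spanPos {k : ℕ} (pos Θ : Finset (Fin k → ℚ)) : Finset (Fin k → ℚ) :=
  pos.filter fun γ => ∃ c : (Fin k → ℚ) → ℤ, γ = ∑ θ ∈ Θ, (c θ : ℚ) • θ

/-- `δ_P`, the sum of the positive roots not lying in the integral span of `Θ`. -/
def deltaP {k : ℕ} (pos Θ : Finset (Fin k → ℚ)) : Fin k → ℚ :=
  ∑ γ ∈ pos \ spanPos pos Θ, γ

/-- Positive roots of type `A_{k-1}`: the vectors `e_i - e_j`, `i < j`. -/
def posA (k : ℕ) : Finset (Fin k → ℚ) :=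
  ((univ : Finset (Fin k × Fin k)).filter fun p => p.1 < p.2).image
    fun p => E k p.1 - E k p.2

/-- Simple roots of type `A_{k-1}`: `α_{i+1} = e_i - e_{i+1}` (0-based `i`, `i+1 < k`). -/
def simpleA (k : ℕ) (i : Fin k) : Fin k → ℚ :=
  if h : i.val + 1 < k then E k i - E k ⟨i.val + 1, h⟩ else 0

/-! A positive root `e_i - e_j` (`i < j`) lies in the `ℤ`-span of `Θ = Σ \ {α_c | c ∈ C}` iff no
`c ∈ C` satisfies `i < c ≤ j`: otherwise it is the telescoping sum `α_{i+1} + ⋯ + α_j`, and if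
such a `c` exists, the partial coordinate sum `v ↦ ∑_{t < c} v_t` vanishes on `Θ` but is `1` on
`e_i - e_j`. So `δ_P` is the sum of the `e_i - e_j` with `i, j` in different blocks; for the blocks
of sizes `ℓ, m, n` its coordinates are `m + n`, `n - ℓ` and `-(ℓ + m)`, and pairing with
`α_a = e_a - e_{a+1}` takes the difference of two consecutive coordinates. -/

lemma card_filter_fst_eq {α β : Type*} [DecidableEq α] [Fintype β] (s : Finset (α × β)) (a : α) :
    #{p ∈ s | p.1 = a} = #{b | (a, b) ∈ s} := by
  refine card_bij' (fun p _ => p.2) (fun b _ => (a, b)) ?_ ?_ ?_ ?_ <;> aesop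

lemma card_filter_snd_eq {α β : Type*} [DecidableEq β] [Fintype α] (s : Finset (α × β)) (b : β) :
    #{p ∈ s | p.2 = b} = #{a | (a, b) ∈ s} := by
  refine card_bij' (fun p _ => p.1) (fun a _ => (a, b)) ?_ ?_ ?_ ?_ <;> aesop

lemma card_filter_le_val {K c : ℕ} (hc : c ≤ K) : #{j : Fin K | c ≤ (j : ℕ)} = K - c := by
  have h := card_filter_add_card_filter_not (s := univ) (fun j : Fin K => (j : ℕ) < c)
  simp only [not_lt, card_univ, Fintype.card_fin, Fin.card_filter_val_lt, min_eq_right hc] at h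
  omega

section TypeA

variable {k : ℕ}

lemma pairing_simpleA (v : Fin k → ℚ) (i : Fin k) (hi : i.val + 1 < k) :
    pairing v (simpleA k i) = v i - v ⟨i.val + 1, hi⟩ := by
  have hne : i ≠ ⟨i.val + 1, hi⟩ := by simp [Fin.ext_iff]
  have hdot (w : Fin k → ℚ) : dot w (simpleA k i) = w i - w ⟨i.val + 1, hi⟩ := by
    simp [simpleA, hi, dot, mul_sub, sum_sub_distrib, E]
  rw [pairing, hdot, hdot]
  simp [simpleA, hi, E, hne, hne.symm]
  ring

lemma E_sub_E_apply_eq_one_iff {i j t : Fin k} (hij : i ≠ j) :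
    (E k i - E k j) t = 1 ↔ t = i := by
  by_cases hti : t = i <;> by_cases htj : t = j <;> simp_all [E]; norm_num

lemma E_sub_E_inj {i j i' j' : Fin k} (hij : i ≠ j) (hij' : i' ≠ j')
    (h : E k i - E k j = E k i' - E k j') : i = i' ∧ j = j' := by
  have hi : i = i' := (E_sub_E_apply_eq_one_iff hij').mp (by
    rw [← h]; exact (E_sub_E_apply_eq_one_iff hij).mpr rfl)
  subst hi
  refine ⟨rfl, ?_⟩
  simpa [E] using congrFun (sub_right_injective h) j

lemma mem_spanPos_iff {pos Θ : Finset (Fin k → ℚ)} {γ : Fin k → ℚ} :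
    γ ∈ spanPos pos Θ ↔ γ ∈ pos ∧ γ ∈ Submodule.span ℤ (Θ : Set (Fin k → ℚ)) := by
  simp only [spanPos, mem_filter, Int.cast_smul_eq_zsmul]
  refine and_congr_right fun _ => ⟨?_, fun hγ => ?_⟩
  · rintro ⟨c, rfl⟩
    exact sum_mem fun θ hθ => Submodule.smul_mem _ _ (Submodule.subset_span hθ)
  · obtain ⟨c, -, hc⟩ := Submodule.mem_span_finset.mp hγ
    exact ⟨c, hc.symm⟩

def partialSum (k c : ℕ) : (Fin k → ℚ) →ₗ[ℚ] ℚ :=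
  ∑ t with t.val < c, LinearMap.proj (R := ℚ) (φ := fun _ : Fin k => ℚ) t

lemma partialSum_E (c : ℕ) (i : Fin k) : partialSum k c (E k i) = if i.val < c then 1 else 0 := by
  simp [partialSum, E]

lemma partialSum_simpleA {c : ℕ} {i : Fin k} (hc : i.val + 1 ≠ c) :
    partialSum k c (simpleA k i) = 0 := by
  unfold simpleA
  split_ifs with hi
  · simp only [map_sub, partialSum_E]
    split_ifs <;> first | rfl | omega | norm_num
  · exact map_zero _

/-- `Θ = Σ \ {α_c | cut c}`, where `α_c = simpleA k ⟨c - 1, _⟩`. -/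
def simpleRootsExcept (k : ℕ) (cut : ℕ → Prop) : Finset (Fin k → ℚ) :=
  (univ.filter fun i : Fin k => i.val + 1 < k ∧ ¬ cut (i.val + 1)).image (simpleA k)

/-- Coordinates `i ≤ j` lie in different blocks, the blocks being delimited by the `c` with `cut c`. -/
def Separated (cut : ℕ → Prop) (i j : ℕ) : Prop := ∃ c, cut c ∧ i < c ∧ c ≤ j

variable {cut : ℕ → Prop}

lemma E_sub_E_mem_span_of_not_separated {i j : Fin k} (hij : i ≤ j)
    (hsep : ¬ Separated cut i j) :
    E k i - E k j ∈ Submodule.span ℤ (simpleRootsExcept k cut : Set (Fin k → ℚ)) := by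
  obtain ⟨i, hi⟩ := i
  obtain ⟨j, hj⟩ := j
  simp only [Fin.mk_le_mk] at hij
  simp only at hsep
  induction j, hij using Nat.le_induction with
  | base => simp
  | succ j hij ih =>
    have hstep : E k ⟨j, by omega⟩ - E k ⟨j + 1, hj⟩ ∈ simpleRootsExcept k cut :=
      mem_image.mpr ⟨⟨j, by omega⟩, by simpa using ⟨hj, fun hc => hsep ⟨j + 1, hc, by omega, le_rfl⟩⟩,
        by simp [simpleA, hj]⟩
    have := add_mem (ih (by omega) fun ⟨c, hc, hic, hcj⟩ => hsep ⟨c, hc, hic, by omega⟩)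
      (Submodule.subset_span hstep)
    rwa [sub_add_sub_cancel] at this

lemma not_separated_of_E_sub_E_mem_span {i j : Fin k}
    (hmem : E k i - E k j ∈ Submodule.span ℤ (simpleRootsExcept k cut : Set (Fin k → ℚ))) :
    ¬ Separated cut i j := by
  rintro ⟨c, hc, hic, hcj⟩
  have hle : Submodule.span ℤ (simpleRootsExcept k cut : Set (Fin k → ℚ)) ≤
      LinearMap.ker ((partialSum k c).restrictScalars ℤ) := by
    rw [Submodule.span_le]
    rintro _ hθ
    obtain ⟨a, ha, rfl⟩ := mem_image.mp hθ
    simp only [mem_filter] at ha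
    exact partialSum_simpleA fun h => ha.2.2 (h ▸ hc)
  have := hle hmem
  simp [partialSum_E, hic, not_lt.mpr hcj] at this

lemma E_sub_E_mem_spanPos_iff {i j : Fin k} (hij : i < j) :
    E k i - E k j ∈ spanPos (posA k) (simpleRootsExcept k cut) ↔ ¬ Separated cut i j := by
  have hpos : E k i - E k j ∈ posA k := mem_image.mpr ⟨(i, j), by simp [hij], rfl⟩
  rw [mem_spanPos_iff, and_iff_right hpos]
  exact ⟨not_separated_of_E_sub_E_mem_span, E_sub_E_mem_span_of_not_separated hij.le⟩

lemma deltaP_simpleRootsExcept :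
    deltaP (posA k) (simpleRootsExcept k cut) =
      ∑ p : Fin k × Fin k with p.1 < p.2 ∧ Separated cut p.1 p.2, (E k p.1 - E k p.2) := by
  have himage : posA k \ spanPos (posA k) (simpleRootsExcept k cut) =
      ({p | p.1 < p.2 ∧ Separated cut p.1 p.2} : Finset (Fin k × Fin k)).image
        fun p => E k p.1 - E k p.2 := by
    ext γ
    rw [mem_sdiff, mem_image]
    constructor
    · rintro ⟨hγ, hspan⟩
      obtain ⟨p, hp, rfl⟩ := mem_image.mp hγ
      have hlt : p.1 < p.2 := (mem_filter.mp hp).2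
      exact ⟨p, mem_filter.mpr ⟨mem_univ _, hlt,
        not_not.mp fun h => hspan ((E_sub_E_mem_spanPos_iff hlt).mpr h)⟩, rfl⟩
    · rintro ⟨p, hp, rfl⟩
      obtain ⟨-, hlt, hsep⟩ := mem_filter.mp hp
      exact ⟨mem_image.mpr ⟨p, mem_filter.mpr ⟨mem_univ _, hlt⟩, rfl⟩,
        fun h => (E_sub_E_mem_spanPos_iff hlt).mp h hsep⟩
  rw [deltaP, himage, sum_image]
  intro p hp q hq hpq
  have h := E_sub_E_inj (mem_filter.mp hp).2.1.ne (mem_filter.mp hq).2.1.ne hpq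
  exact Prod.ext h.1 h.2

lemma sum_E_sub_E_apply (P : Finset (Fin k × Fin k)) (t : Fin k) :
    (∑ p ∈ P, (E k p.1 - E k p.2)) t = #{p ∈ P | p.1 = t} - #{p ∈ P | p.2 = t} := by
  simp [Finset.sum_apply, E, sum_sub_distrib, sum_boole, eq_comm]

lemma deltaP_simpleRootsExcept_apply (t : Fin k) :
    deltaP (posA k) (simpleRootsExcept k cut) t =
      #{j | t < j ∧ Separated cut t j} - #{i | i < t ∧ Separated cut i t} := by
  rw [deltaP_simpleRootsExcept, sum_E_sub_E_apply, card_filter_fst_eq, card_filter_snd_eq]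
  simp

end TypeA

section TwoCuts

variable {ℓ m n : ℕ}

lemma separated_two_cuts_iff {i j : ℕ} :
    Separated (fun c => c = ℓ ∨ c = ℓ + m) i j ↔ (i < ℓ ∧ ℓ ≤ j) ∨ (i < ℓ + m ∧ ℓ + m ≤ j) := by
  simp [Separated, or_and_right, exists_or]

lemma deltaP_two_cuts_apply (t : Fin (ℓ + m + n)) :
    deltaP (posA (ℓ + m + n)) (simpleRootsExcept (ℓ + m + n) fun c => c = ℓ ∨ c = ℓ + m) t =
      if (t : ℕ) < ℓ then (m + n : ℚ) else if (t : ℕ) < ℓ + m then (n - ℓ : ℚ) else -(ℓ + m : ℚ) := by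
  have hup (c : ℕ) (hc : c ≤ ℓ + m + n)
      (h : ∀ j < ℓ + m + n, t < j ∧ ((t < ℓ ∧ ℓ ≤ j) ∨ (t < ℓ + m ∧ ℓ + m ≤ j)) ↔ c ≤ j) :
      #{j | t < j ∧ Separated (fun c => c = ℓ ∨ c = ℓ + m) t j} = ℓ + m + n - c := by
    rw [← card_filter_le_val hc]
    exact congrArg card (filter_congr fun j _ => by
      rw [separated_two_cuts_iff, Fin.lt_def]; exact h j j.isLt)
  have hdown (c : ℕ) (hc : c ≤ ℓ + m + n)
      (h : ∀ i : ℕ, i < t ∧ ((i < ℓ ∧ ℓ ≤ t) ∨ (i < ℓ + m ∧ ℓ + m ≤ t)) ↔ i < c) :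
      #{i | i < t ∧ Separated (fun c => c = ℓ ∨ c = ℓ + m) i t} = c := by
    simp only [separated_two_cuts_iff, Fin.lt_def, h, Fin.card_filter_val_lt, min_eq_right hc]
  rw [deltaP_simpleRootsExcept_apply]
  split_ifs with h₁ h₂
  · rw [hup ℓ (by omega) (by omega), hdown 0 (by omega) (by omega)]
    push_cast [show ℓ ≤ ℓ + m + n by omega]
    ring
  · rw [hup (ℓ + m) (by omega) (by omega), hdown ℓ (by omega) (by omega)]
    push_cast [show ℓ + m ≤ ℓ + m + n by omega]
    ring
  · rw [hup (ℓ + m + n) le_rfl (by omega), hdown (ℓ + m) (by omega) (by omega)]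
    simp

end TwoCuts

/-- Koszul numbers for `SU(ℓ+m+n)/S(U(ℓ)×U(m)×U(n))`: in type `A_{ℓ+m+n-1}` with
`Θ = Σ \ {α_ℓ, α_{ℓ+m}}`, one has `⟨δ_P, h_{α_ℓ}^∨⟩ = ℓ + m` and
`⟨δ_P, h_{α_{ℓ+m}}^∨⟩ = m + n`. -/
theorem stmt4 (ℓ m n : ℕ) (hℓ : 1 ≤ ℓ) (hm : 1 ≤ m) (hn : 1 ≤ n)
    (Θ : Finset (Fin (ℓ + m + n) → ℚ))
    (hΘ : Θ = ((univ : Finset (Fin (ℓ + m + n))).filter fun i =>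
        i.val + 1 < ℓ + m + n ∧ i.val + 1 ≠ ℓ ∧ i.val + 1 ≠ ℓ + m).image
      (simpleA (ℓ + m + n))) :
    pairing (deltaP (posA (ℓ + m + n)) Θ) (simpleA (ℓ + m + n) ⟨ℓ - 1, by omega⟩) =
      (ℓ : ℚ) + m ∧
    pairing (deltaP (posA (ℓ + m + n)) Θ) (simpleA (ℓ + m + n) ⟨ℓ + m - 1, by omega⟩) =
      (m : ℚ) + n := by
  have hΘ' : Θ = simpleRootsExcept (ℓ + m + n) fun c => c = ℓ ∨ c = ℓ + m := by
    rw [hΘ, simpleRootsExcept]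
    congr 1
    ext i
    simp [not_or]
  subst hΘ'
  rw [pairing_simpleA _ _ (by simp only; omega), pairing_simpleA _ _ (by simp only; omega),
    deltaP_two_cuts_apply, deltaP_two_cuts_apply, deltaP_two_cuts_apply, deltaP_two_cuts_apply]
  simp only
  refine ⟨?_, ?_⟩ <;> split_ifs <;> first | omega | ring
end
end

section
/- Let $\Pi$ be a root system with simple roots $\Sigma$, let $\Theta \subsetneq \Sigma$, and let $\delta_P = \sum_{\gamma \in \Pi^+ \setminus \langle\Theta\rangle^+} \gamma$. Then for every simple root $\alpha \in \Sigma \setminus \Theta$, the Koszul number $\langle \delta_P, h_\alpha^\vee \rangle$ is a positive integer. -/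
open Finset
open scoped RealInnerProductSpace Classical

private lemma coeff_zero' {V : Type*} [NormedAddCommGroup V] [InnerProductSpace ℝ V]
    (Sig : Finset V)
    (hind : LinearIndependent ℝ (Subtype.val : {x : V // x ∈ Sig} → V))
    (f : V → ℝ) (h : ∑ γ ∈ Sig, f γ • γ = 0) : ∀ γ ∈ Sig, f γ = 0 := by
  intro γ hγ
  have key := Fintype.linearIndependent_iff.mp hind (fun i => f i.1) ?_ ⟨γ, hγ⟩
  · exact key
  · rw [← h]
    exact Finset.sum_coe_sort Sig (fun γ => f γ • γ)

/-- For a root system with base `Sig`, a proper subset `Θ ⊊ Sig`, and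
`δ_P = ∑_{γ ∈ Π⁺ \ ⟨Θ⟩⁺} γ`, the Koszul number `⟨δ_P, h_α^∨⟩` is a positive integer
for every simple root `α ∈ Sig \ Θ`. -/
theorem stmt6 {V : Type*} [NormedAddCommGroup V] [InnerProductSpace ℝ V]
    (Rt Pos Sig Θ : Finset V)
    (h0 : (0 : V) ∉ Rt)
    (hrefl : ∀ α ∈ Rt, ∀ β ∈ Rt, β - (2 * ⟪β, α⟫ / ⟪α, α⟫) • α ∈ Rt)
    (hcrys : ∀ α ∈ Rt, ∀ β ∈ Rt, ∃ z : ℤ, 2 * ⟪β, α⟫ / ⟪α, α⟫ = z)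
    (hred : ∀ α ∈ Rt, ∀ t : ℝ, t • α ∈ Rt → t = 1 ∨ t = -1)
    (hPos : Pos ⊆ Rt)
    (hdec : ∀ β ∈ Rt, (β ∈ Pos ↔ -β ∉ Pos))
    (hSig : Sig ⊆ Pos)
    (hind : LinearIndependent ℝ (Subtype.val : {x : V // x ∈ Sig} → V))
    (hgen : ∀ β ∈ Pos, ∃ c : V → ℕ, β = ∑ α ∈ Sig, (c α : ℝ) • α)
    (hΘ : Θ ⊆ Sig) (hΘne : Θ ≠ Sig)
    (δP : V)
    (hδ : δP = ∑ γ ∈ Pos.filter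
        (fun γ => ¬ ∃ c : V → ℤ, γ = ∑ θ ∈ Θ, (c θ : ℝ) • θ), γ) :
    ∀ α ∈ Sig, α ∉ Θ → ∃ k : ℕ, 0 < k ∧ 2 * ⟪δP, α⟫ / ⟪α, α⟫ = k := by
  intro α hαS hαΘ
  have hαP : α ∈ Pos := hSig hαS
  have hαR : α ∈ Rt := hPos hαP
  have hα0 : α ≠ 0 := fun h => h0 (h ▸ hαR)
  have haa : (0:ℝ) < ⟪α, α⟫ := by
    rcases lt_or_eq_of_le (real_inner_self_nonneg (x := α)) with h | h
    · exact h
    · exact absurd (inner_self_eq_zero.mp h.symm) hα0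
  have haa' : ⟪α, α⟫ ≠ 0 := ne_of_gt haa
  -- notation for the pairing coefficient
  set m : V → ℝ := fun β => 2 * ⟪β, α⟫ / ⟪α, α⟫ with hm
  -- `s_α` fixes no positive root other than sending them among `Pos \ {α}`
  have keyA : ∀ β ∈ Pos, β ≠ α → (β - m β • α ∈ Pos ∧ β - m β • α ≠ α) := by
    intro β hβP hβα
    have hβR : β ∈ Rt := hPos hβP
    have hsR : β - m β • α ∈ Rt := hrefl α hαR β hβR
    constructor
    · by_contra hs
      have hnegP : -(β - m β • α) ∈ Pos := by
        by_contra hneg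
        exact hs (((hdec _ hsR)).mpr hneg)
      obtain ⟨c, hc⟩ := hgen β hβP
      obtain ⟨e, he⟩ := hgen _ hnegP
      -- linear relation
      have hrel : ∑ γ ∈ Sig, (((c γ : ℝ) + (e γ : ℝ)) - (if γ = α then m β else 0)) • γ = 0 := by
        have h1 : ∑ γ ∈ Sig, (if γ = α then m β else 0) • γ = m β • α := by
          rw [Finset.sum_eq_single α]
          · simp
          · intro b _ hb; simp [hb]
          · intro h; exact absurd hαS h
        have h2 : (∑ γ ∈ Sig, (c γ : ℝ) • γ) + (∑ γ ∈ Sig, (e γ : ℝ) • γ) = m β • α := by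
          rw [← hc, ← he]; abel
        calc ∑ γ ∈ Sig, (((c γ : ℝ) + (e γ : ℝ)) - (if γ = α then m β else 0)) • γ
            = ∑ γ ∈ Sig, ((c γ : ℝ) • γ + (e γ : ℝ) • γ - (if γ = α then m β else 0) • γ) := by
              apply Finset.sum_congr rfl; intro γ _; rw [sub_smul, add_smul]
          _ = (∑ γ ∈ Sig, (c γ : ℝ) • γ) + (∑ γ ∈ Sig, (e γ : ℝ) • γ)
              - ∑ γ ∈ Sig, (if γ = α then m β else 0) • γ := by
              rw [Finset.sum_sub_distrib, Finset.sum_add_distrib]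
          _ = 0 := by rw [h1, h2, sub_self]
      have hzero := coeff_zero' Sig hind _ hrel
      have hcz : ∀ γ ∈ Sig, γ ≠ α → (c γ : ℝ) = 0 := by
        intro γ hγ hγα
        have := hzero γ hγ
        simp only [hγα, if_false, sub_zero] at this
        have hc0 : (0:ℝ) ≤ (c γ : ℝ) := by positivity
        have he0 : (0:ℝ) ≤ (e γ : ℝ) := by positivity
        linarith
      have hβeq : β = (c α : ℝ) • α := by
        rw [hc, Finset.sum_eq_single α]
        · intro b hb hbα; rw [hcz b hb hbα, zero_smul]
        · intro h; exact absurd hαS h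
      rcases hred α hαR _ (hβeq ▸ hβR) with h1 | h1
      · exact hβα (by rw [hβeq, h1, one_smul])
      · have : (0:ℝ) ≤ (c α : ℝ) := by positivity
        linarith
    · intro hs
      have hβeq : β = (1 + m β) • α := by
        rw [add_smul, one_smul]
        exact eq_add_of_sub_eq hs
      rcases hred α hαR _ (hβeq ▸ hβR) with h1 | h1
      · exact hβα (by rw [hβeq, h1, one_smul])
      · have hβneg : β = -α := by rw [hβeq, h1, neg_one_smul]
        rw [hβneg] at hβP
        exact ((hdec α hαR).mp hαP) hβP
  -- distinct simple roots have nonpositive inner product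
  have keyC : ∀ θ ∈ Sig, θ ≠ α → ⟪θ, α⟫ ≤ 0 := by
    intro θ hθS hθα
    by_contra hpos
    push_neg at hpos
    have hθR : θ ∈ Rt := hPos (hSig hθS)
    have hmθ : 0 < m θ := by
      apply div_pos _ haa
      linarith
    have hsR : θ - m θ • α ∈ Rt := hrefl α hαR θ hθR
    by_cases hs : θ - m θ • α ∈ Pos
    · obtain ⟨e, he⟩ := hgen _ hs
      have hrel : ∑ γ ∈ Sig, ((e γ : ℝ) - (if γ = θ then 1 else 0) + (if γ = α then m θ else 0)) • γ = 0 := by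
        have h1 : ∑ γ ∈ Sig, (if γ = θ then (1:ℝ) else 0) • γ = θ := by
          rw [Finset.sum_eq_single θ]
          · simp
          · intro b _ hb; simp [hb]
          · intro h; exact absurd hθS h
        have h2 : ∑ γ ∈ Sig, (if γ = α then m θ else 0) • γ = m θ • α := by
          rw [Finset.sum_eq_single α]
          · simp
          · intro b _ hb; simp [hb]
          · intro h; exact absurd hαS h
        calc ∑ γ ∈ Sig, ((e γ : ℝ) - (if γ = θ then 1 else 0) + (if γ = α then m θ else 0)) • γ
            = ∑ γ ∈ Sig, ((e γ : ℝ) • γ - (if γ = θ then (1:ℝ) else 0) • γ + (if γ = α then m θ else 0) • γ) := by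
              apply Finset.sum_congr rfl; intro γ _; rw [add_smul, sub_smul]
          _ = (∑ γ ∈ Sig, (e γ : ℝ) • γ) - θ + m θ • α := by
              rw [Finset.sum_add_distrib, Finset.sum_sub_distrib, h1, h2]
          _ = 0 := by rw [← he]; abel
      have := coeff_zero' Sig hind _ hrel α hαS
      rw [if_neg (Ne.symm hθα), if_pos rfl] at this
      have he0 : (0:ℝ) ≤ (e α : ℝ) := by positivity
      linarith
    · have hnegP : -(θ - m θ • α) ∈ Pos := by
        by_contra hneg
        exact hs (((hdec _ hsR)).mpr hneg)
      obtain ⟨e, he⟩ := hgen _ hnegP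
      have hrel : ∑ γ ∈ Sig, ((e γ : ℝ) + (if γ = θ then 1 else 0) - (if γ = α then m θ else 0)) • γ = 0 := by
        have h1 : ∑ γ ∈ Sig, (if γ = θ then (1:ℝ) else 0) • γ = θ := by
          rw [Finset.sum_eq_single θ]
          · simp
          · intro b _ hb; simp [hb]
          · intro h; exact absurd hθS h
        have h2 : ∑ γ ∈ Sig, (if γ = α then m θ else 0) • γ = m θ • α := by
          rw [Finset.sum_eq_single α]
          · simp
          · intro b _ hb; simp [hb]
          · intro h; exact absurd hαS h
        calc ∑ γ ∈ Sig, ((e γ : ℝ) + (if γ = θ then 1 else 0) - (if γ = α then m θ else 0)) • γ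
            = ∑ γ ∈ Sig, ((e γ : ℝ) • γ + (if γ = θ then (1:ℝ) else 0) • γ - (if γ = α then m θ else 0) • γ) := by
              apply Finset.sum_congr rfl; intro γ _; rw [sub_smul, add_smul]
          _ = (∑ γ ∈ Sig, (e γ : ℝ) • γ) + θ - m θ • α := by
              rw [Finset.sum_sub_distrib, Finset.sum_add_distrib, h1, h2]
          _ = 0 := by rw [← he]; abel
      have := coeff_zero' Sig hind _ hrel θ hθS
      rw [if_pos rfl, if_neg hθα] at this
      have he0 : (0:ℝ) ≤ (e θ : ℝ) := by positivity
      linarith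
  -- the sum of positive roots pairs to ⟪α,α⟫ with α
  have keyB : ⟪∑ γ ∈ Pos, γ, α⟫ = ⟪α, α⟫ := by
    set E := Pos.erase α with hE
    have hmem : ∀ β ∈ E, β - m β • α ∈ E := by
      intro β hβ
      obtain ⟨hne, hβP⟩ := Finset.mem_erase.mp hβ
      obtain ⟨h1, h2⟩ := keyA β hβP hne
      exact Finset.mem_erase.mpr ⟨h2, h1⟩
    have hinv : ∀ β ∈ E, (β - m β • α) - m (β - m β • α) • α = β := by
      intro β _
      have : m (β - m β • α) = - m β := by
        simp only [hm]
        rw [inner_sub_left, real_inner_smul_left]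
        field_simp
        ring
      rw [this]
      simp
    have hsum : ∑ β ∈ E, (β - m β • α) = ∑ β ∈ E, β := by
      apply Finset.sum_bij' (fun β _ => β - m β • α) (fun β _ => β - m β • α)
        hmem hmem hinv hinv
      intro a _
      rfl
    have hsum2 : ∑ β ∈ E, (β - m β • α) = (∑ β ∈ E, β) - (∑ β ∈ E, m β) • α := by
      rw [Finset.sum_sub_distrib, Finset.sum_smul]
    have h3 : (∑ β ∈ E, m β) • α = 0 := by
      rw [hsum2] at hsum
      exact sub_eq_self.mp hsum
    have h4 : (∑ β ∈ E, m β) = 0 := by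
      by_contra h
      exact hα0 ((smul_eq_zero.mp h3).resolve_left h)
    have h5 : ⟪∑ β ∈ E, β, α⟫ = 0 := by
      have : ∑ β ∈ E, m β = 2 * ⟪∑ β ∈ E, β, α⟫ / ⟪α, α⟫ := by
        rw [sum_inner]
        rw [Finset.mul_sum, Finset.sum_div]
      rw [this] at h4
      have h6 := (div_eq_zero_iff.mp h4).resolve_right haa'
      linarith
    rw [← Finset.add_sum_erase Pos _ hαP, inner_add_left, h5, add_zero]
  -- the Θ-part pairs nonpositively
  set P : V → Prop := fun γ => ∃ c : V → ℤ, γ = ∑ θ ∈ Θ, (c θ : ℝ) • θ with hP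
  have keyD : ∀ γ ∈ Pos.filter P, ⟪γ, α⟫ ≤ 0 := by
    intro γ hγ
    rw [Finset.mem_filter] at hγ
    obtain ⟨hγP, e, he⟩ := hγ
    obtain ⟨c, hc⟩ := hgen γ hγP
    have heS : γ = ∑ γ' ∈ Sig, (if γ' ∈ Θ then (e γ' : ℝ) else 0) • γ' := by
      rw [he, ← Finset.sum_subset hΘ (fun x _ hx => by simp [hx])]
      exact Finset.sum_congr rfl (fun x hx => by rw [if_pos hx])
    have hrel : ∑ γ' ∈ Sig, ((c γ' : ℝ) - (if γ' ∈ Θ then (e γ' : ℝ) else 0)) • γ' = 0 := by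
      calc ∑ γ' ∈ Sig, ((c γ' : ℝ) - (if γ' ∈ Θ then (e γ' : ℝ) else 0)) • γ'
          = ∑ γ' ∈ Sig, ((c γ' : ℝ) • γ' - (if γ' ∈ Θ then (e γ' : ℝ) else 0) • γ') := by
            apply Finset.sum_congr rfl; intro x _; rw [sub_smul]
        _ = (∑ γ' ∈ Sig, (c γ' : ℝ) • γ') - ∑ γ' ∈ Sig, (if γ' ∈ Θ then (e γ' : ℝ) else 0) • γ' := by
            rw [Finset.sum_sub_distrib]
        _ = γ - γ := by rw [← hc, ← heS]
        _ = 0 := sub_self γ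
    have hzero := coeff_zero' Sig hind _ hrel
    rw [hc, sum_inner]
    apply Finset.sum_nonpos
    intro γ' hγ'
    rw [real_inner_smul_left]
    by_cases hmem : γ' ∈ Θ
    · have hne : γ' ≠ α := fun h => hαΘ (h ▸ hmem)
      have := keyC γ' hγ' hne
      have hc0 : (0:ℝ) ≤ (c γ' : ℝ) := by positivity
      exact mul_nonpos_of_nonneg_of_nonpos hc0 this
    · have := hzero γ' hγ'
      simp only [hmem, if_false, sub_zero] at this
      rw [this, zero_mul]
  -- positivity of ⟪δP, α⟫
  have hsplit : (∑ γ ∈ Pos.filter P, γ) + δP = ∑ γ ∈ Pos, γ := by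
    rw [hδ]
    exact Finset.sum_filter_add_sum_filter_not Pos P _
  have hδα : ⟪α, α⟫ ≤ ⟪δP, α⟫ := by
    have h1 : ⟪∑ γ ∈ Pos.filter P, γ, α⟫ + ⟪δP, α⟫ = ⟪α, α⟫ := by
      rw [← inner_add_left, hsplit, keyB]
    have h2 : ⟪∑ γ ∈ Pos.filter P, γ, α⟫ ≤ 0 := by
      rw [sum_inner]
      exact Finset.sum_nonpos keyD
    linarith
  have hδpos : 0 < 2 * ⟪δP, α⟫ / ⟪α, α⟫ := by
    apply div_pos _ haa
    linarith
  -- integrality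
  have hint : ∀ γ ∈ Pos.filter (fun γ => ¬ P γ), ∃ z : ℤ, 2 * ⟪γ, α⟫ / ⟪α, α⟫ = z := by
    intro γ hγ
    exact hcrys α hαR γ (hPos (Finset.mem_filter.mp hγ).1)
  set S := Pos.filter (fun γ => ¬ P γ) with hS
  set z : V → ℤ := fun γ => if h : γ ∈ S then (hint γ h).choose else 0 with hz
  have hzspec : ∀ γ ∈ S, 2 * ⟪γ, α⟫ / ⟪α, α⟫ = (z γ : ℝ) := by
    intro γ hγ
    rw [hz]
    simp only [dif_pos hγ]
    exact (hint γ hγ).choose_spec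
  have hcast : 2 * ⟪δP, α⟫ / ⟪α, α⟫ = ((∑ γ ∈ S, z γ : ℤ) : ℝ) := by
    rw [hδ, sum_inner, Finset.mul_sum, Finset.sum_div]
    push_cast
    exact Finset.sum_congr rfl hzspec
  set Z : ℤ := ∑ γ ∈ S, z γ with hZ
  have hZpos : 0 < Z := by
    have : (0:ℝ) < (Z : ℝ) := hcast ▸ hδpos
    exact_mod_cast this
  refine ⟨Z.toNat, ?_, ?_⟩
  · omega
  · rw [hcast]
    norm_cast
    omega
end

section
/- In the root system of type $C_\ell$ with simple roots $\alpha_1,\ldots,\alpha_\ell$ (with $\alpha_\ell$ long), let $1 \le p \le \ell-1$, let $\Theta = \Sigma\setminus\{\alpha_p, \alpha_\ell\}$, and let $\delta_P = \sum_{\gamma\in\Pi^+\setminus\langle\Theta\rangle^+}\gamma$. Then $\langle \delta_P, h_{\alpha_p}^\vee\rangle = \ell$ and $\langle \delta_P, h_{\alpha_\ell}^\vee\rangle = \ell - p + 1$. -/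
/-!
Every root in `Θ` is `e_i - e_{i+1}` with `i + 1 ≠ p` (indices from `0`), so the coordinate sums
over `{m < p}` and over all `m` vanish on the integral span of `Θ`. Among the positive roots this leaves exactly the
`e_i - e_j`, `i < j`, with `i` and `j` on the same side of `p`, and each of those telescopes into a
sum of elements of `Θ`. Counting roots coordinatewise in `δ_P = Σ Π⁺ - Σ ⟨Θ⟩⁺` gives the coordinate
`2ℓ - p + 1` at the first `p` indices and `ℓ - p + 1` at the others; pairing with the coroots
`e_{p-1} - e_p` of `α_p` and `e_{ℓ-1}` of `α_ℓ` gives `ℓ` and `ℓ - p + 1`.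
-/

open Finset
open scoped Classical

noncomputable section

/-- Positive roots of type `C_ℓ`: `e_i ± e_j` (`i < j`) and `2e_i`. -/
def posC (ℓ : ℕ) : Finset (Fin ℓ → ℚ) :=
  (((univ : Finset (Fin ℓ × Fin ℓ)).filter fun p => p.1 < p.2).image
      fun p => E ℓ p.1 - E ℓ p.2) ∪
  (((univ : Finset (Fin ℓ × Fin ℓ)).filter fun p => p.1 < p.2).image
      fun p => E ℓ p.1 + E ℓ p.2) ∪
  ((univ : Finset (Fin ℓ)).image fun i => (2 : ℚ) • E ℓ i)

/-- Simple roots of type `C_ℓ`: `α_{i+1} = e_i - e_{i+1}` for `i + 1 < ℓ`, and the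
long simple root `α_ℓ = 2e_{ℓ-1}`. -/
def simpleC (ℓ : ℕ) (i : Fin ℓ) : Fin ℓ → ℚ :=
  if h : i.val + 1 < ℓ then E ℓ i - E ℓ ⟨i.val + 1, h⟩ else (2 : ℚ) • E ℓ i

lemma exists_int_combination_iff_mem_span {M : Type*} [AddCommGroup M] [Module ℚ M]
    {Θ : Finset M} {γ : M} :
    (∃ c : M → ℤ, γ = ∑ θ ∈ Θ, (c θ : ℚ) • θ) ↔ γ ∈ Submodule.span ℤ (Θ : Set M) := by
  simp only [Submodule.mem_span_finset, Int.cast_smul_eq_zsmul]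
  constructor
  · rintro ⟨c, rfl⟩
    refine ⟨fun θ => if θ ∈ Θ then c θ else 0,
      Function.support_subset_iff'.2 fun θ hθ => by simp_all,
      sum_congr rfl fun θ hθ => by simp [hθ]⟩
  · rintro ⟨c, -, rfl⟩
    exact ⟨c, rfl⟩

lemma card_filter_fst_eq_s7 {α : Type*} [Fintype α] [DecidableEq α] (s : Finset (α × α)) (m : α) :
    #(s.filter fun q => m = q.1) = #{j | (m, j) ∈ s} := by
  refine card_bij' (fun q _ => q.2) (fun j _ => (m, j)) ?_ ?_ ?_ ?_ <;> simp +contextual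

lemma card_filter_snd_eq_s7 {α : Type*} [Fintype α] [DecidableEq α] (s : Finset (α × α)) (m : α) :
    #(s.filter fun q => m = q.2) = #{i | (i, m) ∈ s} := by
  refine card_bij' (fun q _ => q.1) (fun i _ => (i, m)) ?_ ?_ ?_ ?_ <;> simp +contextual

section
variable {k : ℕ}

@[simp] lemma E_apply (i j : Fin k) : E k i j = if j = i then 1 else 0 := rfl

lemma dot_E_sub_E (v : Fin k → ℚ) (a b : Fin k) : dot v (E k a - E k b) = v a - v b := by
  simp [dot, mul_sub, sum_sub_distrib]

lemma dot_two_smul_E (v : Fin k → ℚ) (a : Fin k) : dot v ((2 : ℚ) • E k a) = 2 * v a := by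
  simpa [dot] using mul_comm (v a) 2

lemma pairing_E_sub_E (v : Fin k → ℚ) {a b : Fin k} (hab : a ≠ b) :
    pairing v (E k a - E k b) = v a - v b := by
  rw [pairing, dot_E_sub_E, dot_E_sub_E]
  simp only [Pi.sub_apply, E_apply, ↓reduceIte, if_neg hab, if_neg hab.symm]
  ring

lemma pairing_two_smul_E (v : Fin k → ℚ) (a : Fin k) : pairing v ((2 : ℚ) • E k a) = v a := by
  rw [pairing, dot_two_smul_E, dot_two_smul_E]
  simp only [Pi.smul_apply, E_apply, ↓reduceIte, smul_eq_mul]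
  ring

lemma E_sub_E_injOn : Set.InjOn (fun q : Fin k × Fin k => E k q.1 - E k q.2) {q | q.1 < q.2} := by
  rintro ⟨i, j⟩ hij ⟨i', j'⟩ hij' h
  have hi := congrFun h i
  have hj := congrFun h j
  simp only [Set.mem_ofPred_eq, Pi.sub_apply, E_apply] at hij hij' hi hj
  grind

lemma E_add_E_injOn : Set.InjOn (fun q : Fin k × Fin k => E k q.1 + E k q.2) {q | q.1 < q.2} := by
  rintro ⟨i, j⟩ hij ⟨i', j'⟩ hij' h
  have hi := congrFun h i
  have hj := congrFun h j
  have hi' := congrFun h i'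
  simp only [Set.mem_ofPred_eq, Pi.add_apply, E_apply] at hij hij' hi hj hi'
  grind

lemma two_smul_E_injective : Function.Injective fun i => (2 : ℚ) • E k i := by
  intro i j h
  have hi := congrFun h i
  simp only [Pi.smul_apply, E_apply, smul_eq_mul] at hi
  grind

lemma E_sub_E_ne_E_add_E {i j : Fin k} (h : i < j) (i' j' : Fin k) :
    E k i - E k j ≠ E k i' + E k j' := by
  intro he
  have := congrFun he j
  simp only [Pi.sub_apply, Pi.add_apply, E_apply] at this
  grind

lemma E_sub_E_ne_two_smul_E {i j : Fin k} (h : i < j) (i' : Fin k) :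
    E k i - E k j ≠ (2 : ℚ) • E k i' := by
  intro he
  have := congrFun he j
  simp only [Pi.sub_apply, Pi.smul_apply, smul_eq_mul, E_apply] at this
  grind

lemma E_add_E_ne_two_smul_E {i j : Fin k} (h : i < j) (i' : Fin k) :
    E k i + E k j ≠ (2 : ℚ) • E k i' := by
  intro he
  have := congrFun he i
  simp only [Pi.add_apply, Pi.smul_apply, smul_eq_mul, E_apply] at this
  grind

lemma card_filter_eq_sub {P : Fin k → Prop} [DecidablePred P] {a b : ℕ} (hab : a ≤ b) (hb : b ≤ k)
    (hP : ∀ j : Fin k, P j ↔ a ≤ (j : ℕ) ∧ (j : ℕ) < b) : (#{j | P j} : ℚ) = b - a := by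
  have : ({j | P j} : Finset (Fin k)).map Fin.valEmbedding = Ico a b := by
    ext n
    simp only [mem_map, mem_filter, mem_univ, true_and, hP, Fin.valEmbedding_apply, mem_Ico]
    exact ⟨by rintro ⟨j, hj, rfl⟩; exact hj, fun hn => ⟨⟨n, by omega⟩, hn, rfl⟩⟩
  rw [← card_map, this, Nat.card_Ico, Nat.cast_sub hab]

lemma sum_image_E_sub_E_apply {s : Finset (Fin k × Fin k)} (hs : ∀ q ∈ s, q.1 < q.2) (m : Fin k) :
    ∑ γ ∈ s.image (fun q => E k q.1 - E k q.2), γ m = #{j | (m, j) ∈ s} - #{i | (i, m) ∈ s} := by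
  rw [sum_image (E_sub_E_injOn.mono hs)]
  simp only [Pi.sub_apply, E_apply, sum_sub_distrib, sum_boole, card_filter_fst_eq_s7,
    card_filter_snd_eq_s7]

lemma sum_image_E_add_E_apply {s : Finset (Fin k × Fin k)} (hs : ∀ q ∈ s, q.1 < q.2) (m : Fin k) :
    ∑ γ ∈ s.image (fun q => E k q.1 + E k q.2), γ m = #{j | (m, j) ∈ s} + #{i | (i, m) ∈ s} := by
  rw [sum_image (E_add_E_injOn.mono hs)]
  simp only [Pi.add_apply, E_apply, sum_add_distrib, sum_boole, card_filter_fst_eq_s7,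
    card_filter_snd_eq_s7]

lemma sum_image_two_smul_E_apply (m : Fin k) :
    ∑ γ ∈ univ.image (fun i => (2 : ℚ) • E k i), γ m = 2 := by
  rw [sum_image two_smul_E_injective.injOn]
  simp

lemma sum_posC_apply (m : Fin k) : ∑ γ ∈ posC k, γ m = 2 * (k - m) := by
  have hlt : ∀ q ∈ ({q | q.1 < q.2} : Finset (Fin k × Fin k)), q.1 < q.2 :=
    fun q hq => (mem_filter.1 hq).2
  rw [posC, sum_union, sum_union, sum_image_E_sub_E_apply hlt, sum_image_E_add_E_apply hlt,
    sum_image_two_smul_E_apply]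
  · have h_gt := card_filter_eq_sub (P := fun j : Fin k => m < j) (a := m + 1) (b := k)
      m.isLt le_rfl (fun j => by rw [Fin.lt_def]; omega)
    have h_lt := card_filter_eq_sub (P := fun i : Fin k => i < m) (a := 0) (b := m)
      (by omega) m.isLt.le (fun j => by rw [Fin.lt_def]; omega)
    simp only [mem_filter, mem_univ, true_and, h_gt, h_lt]
    push_cast
    ring
  · simp only [disjoint_left, mem_image]
    rintro _ ⟨q, hq, rfl⟩ ⟨q', -, h⟩
    exact E_sub_E_ne_E_add_E (hlt q hq) _ _ h.symm
  · simp only [disjoint_left, mem_union, mem_image]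
    rintro _ (⟨q, hq, rfl⟩ | ⟨q, hq, rfl⟩) ⟨i, -, h⟩
    · exact E_sub_E_ne_two_smul_E (hlt q hq) _ h.symm
    · exact E_add_E_ne_two_smul_E (hlt q hq) _ h.symm

lemma sum_apply_E_sub_E (s : Finset (Fin k)) (i j : Fin k) :
    ∑ m ∈ s, (E k i - E k j) m = (if i ∈ s then 1 else 0) - if j ∈ s then 1 else 0 := by
  simp [sum_sub_distrib]

lemma sum_apply_eq_zero_of_mem_span {s : Finset (Fin k)} {Θ : Set (Fin k → ℚ)}
    (hΘ : ∀ θ ∈ Θ, ∑ i ∈ s, θ i = 0) {γ : Fin k → ℚ} (hγ : γ ∈ Submodule.span ℤ Θ) :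
    ∑ i ∈ s, γ i = 0 := by
  induction hγ using Submodule.span_induction with
  | mem θ hθ => exact hΘ θ hθ
  | zero => simp
  | add v w _ _ hv hw => simp [sum_add_distrib, hv, hw]
  | smul n v _ hv => simp [← mul_sum, hv]

end

section
variable {ℓ p : ℕ}

lemma simpleC_of_lt {i : Fin ℓ} (h : (i : ℕ) + 1 < ℓ) : simpleC ℓ i = E ℓ i - E ℓ ⟨i + 1, h⟩ :=
  dif_pos h

lemma simpleC_last {i : Fin ℓ} (h : (i : ℕ) + 1 = ℓ) : simpleC ℓ i = (2 : ℚ) • E ℓ i :=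
  dif_neg (by omega)

def thetaC (ℓ p : ℕ) : Finset (Fin ℓ → ℚ) :=
  ((univ : Finset (Fin ℓ)).filter fun i => i.val + 1 ≠ p ∧ i.val + 1 ≠ ℓ).image (simpleC ℓ)

lemma sum_lt_apply_eq_zero_of_mem_thetaC {n : ℕ} (hn : n = p ∨ n = ℓ) {θ : Fin ℓ → ℚ}
    (hθ : θ ∈ thetaC ℓ p) : ∑ m ∈ univ.filter fun m : Fin ℓ => (m : ℕ) < n, θ m = 0 := by
  obtain ⟨i, hi, rfl⟩ := mem_image.1 hθ
  simp only [mem_filter, mem_univ, true_and] at hi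
  rw [simpleC_of_lt (by omega), sum_apply_E_sub_E]
  simp only [mem_filter, mem_univ, true_and]
  split_ifs <;> first | omega | norm_num

lemma E_sub_E_mem_span_thetaC {i j : Fin ℓ} (hij : i ≤ j) (hblock : (i : ℕ) < p ↔ (j : ℕ) < p) :
    E ℓ i - E ℓ j ∈ Submodule.span ℤ (thetaC ℓ p : Set (Fin ℓ → ℚ)) := by
  obtain ⟨n, hn⟩ : ∃ n, (j : ℕ) = i + n := ⟨j - i, by rw [Fin.le_def] at hij; omega⟩
  induction n generalizing j with
  | zero => simp [Fin.ext (by omega : (j : ℕ) = i)]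
  | succ n ih =>
    let j' : Fin ℓ := ⟨i + n, by omega⟩
    have hsplit : E ℓ i - E ℓ j = (E ℓ i - E ℓ j') + simpleC ℓ j' := by
      rw [simpleC_of_lt (by simp [j']; omega),
        show (⟨j' + 1, _⟩ : Fin ℓ) = j from Fin.ext (by simp [j']; omega)]
      abel
    rw [hsplit]
    refine add_mem (ih (Fin.le_def.2 (by simp [j'])) (by simp [j']; omega) rfl)
      (Submodule.subset_span (mem_image_of_mem _ (by simp [j']; omega)))

lemma spanPos_posC_thetaC :
    spanPos (posC ℓ) (thetaC ℓ p) =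
      ({q | q.1 < q.2 ∧ ((q.1 : ℕ) < p ↔ (q.2 : ℕ) < p)} : Finset (Fin ℓ × Fin ℓ)).image
        fun q => E ℓ q.1 - E ℓ q.2 := by
  ext γ
  simp only [spanPos, mem_filter, exists_int_combination_iff_mem_span, mem_image, mem_univ,
    true_and]
  constructor
  · rintro ⟨hpos, hspan⟩
    have hsum := fun n hn => sum_apply_eq_zero_of_mem_span
      (fun θ hθ => sum_lt_apply_eq_zero_of_mem_thetaC (n := n) hn hθ) hspan
    have hp := hsum p (.inl rfl)
    have hℓ := hsum ℓ (.inr rfl)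
    simp only [posC, mem_union, mem_image, mem_filter, mem_univ, true_and] at hpos
    rcases hpos with (⟨q, hq, rfl⟩ | ⟨q, hq, rfl⟩) | ⟨i, rfl⟩
    · refine ⟨q, ⟨hq, ?_⟩, rfl⟩
      simp only [sum_apply_E_sub_E, mem_filter, mem_univ, true_and] at hp
      split_ifs at hp <;> first | omega | norm_num at hp
    · simp [sum_add_distrib] at hℓ
    · simp at hℓ
  · rintro ⟨q, ⟨hq, hblock⟩, rfl⟩
    refine ⟨?_, E_sub_E_mem_span_thetaC hq.le hblock⟩
    simp only [posC, mem_union, mem_image, mem_filter, mem_univ, true_and]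
    exact .inl (.inl ⟨q, hq, rfl⟩)

lemma sum_spanPos_posC_thetaC_apply (hp : p ≤ ℓ) (m : Fin ℓ) :
    ∑ γ ∈ spanPos (posC ℓ) (thetaC ℓ p), γ m =
      if (m : ℕ) < p then (p - 1 - 2 * m : ℚ) else ℓ - 1 + p - 2 * m := by
  have hm := m.isLt
  rw [spanPos_posC_thetaC, sum_image_E_sub_E_apply fun q hq => (mem_filter.1 hq).2.1]
  simp only [mem_filter, mem_univ, true_and]
  split_ifs with hmp
  · rw [card_filter_eq_sub (a := m + 1) (b := p) (by omega) hp (fun j => by rw [Fin.lt_def]; omega),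
      card_filter_eq_sub (a := 0) (b := m) (by omega) hm.le (fun j => by rw [Fin.lt_def]; omega)]
    push_cast
    ring
  · rw [card_filter_eq_sub (a := m + 1) (b := ℓ) (by omega) le_rfl
        (fun j => by rw [Fin.lt_def]; omega),
      card_filter_eq_sub (a := p) (b := m) (by omega) hm.le (fun j => by rw [Fin.lt_def]; omega)]
    push_cast
    ring

lemma deltaP_posC_thetaC_apply (hp : p ≤ ℓ) (m : Fin ℓ) :
    deltaP (posC ℓ) (thetaC ℓ p) m = if (m : ℕ) < p then (2 * ℓ - p + 1 : ℚ) else ℓ - p + 1 := by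
  have hsub : spanPos (posC ℓ) (thetaC ℓ p) ⊆ posC ℓ := filter_subset _ _
  rw [deltaP, Finset.sum_apply, sum_sdiff_eq_sub hsub, sum_posC_apply,
    sum_spanPos_posC_thetaC_apply hp]
  split_ifs <;> ring

end

/-- Koszul numbers for `Sp(ℓ)/U(p)×U(ℓ-p)`: in type `C_ℓ` with `Θ = Σ \ {α_p, α_ℓ}`,
one has `⟨δ_P, h_{α_p}^∨⟩ = ℓ` and `⟨δ_P, h_{α_ℓ}^∨⟩ = ℓ - p + 1`. -/
theorem stmt7 (ℓ p : ℕ) (hp : 1 ≤ p) (hpl : p ≤ ℓ - 1)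
    (Θ : Finset (Fin ℓ → ℚ))
    (hΘ : Θ = ((univ : Finset (Fin ℓ)).filter fun i =>
        i.val + 1 ≠ p ∧ i.val + 1 ≠ ℓ).image (simpleC ℓ)) :
    pairing (deltaP (posC ℓ) Θ) (simpleC ℓ ⟨p - 1, by omega⟩) = (ℓ : ℚ) ∧
    pairing (deltaP (posC ℓ) Θ) (simpleC ℓ ⟨ℓ - 1, by omega⟩) = (ℓ : ℚ) - p + 1 := by
  obtain rfl : Θ = thetaC ℓ p := hΘ
  have hpℓ : p ≤ ℓ := by omega
  rw [simpleC_of_lt (by simp; omega), simpleC_last (by simp; omega),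
    pairing_E_sub_E _ (by simp [Fin.ext_iff]), pairing_two_smul_E,
    deltaP_posC_thetaC_apply hpℓ, deltaP_posC_thetaC_apply hpℓ, deltaP_posC_thetaC_apply hpℓ,
    if_pos (by simp; omega), if_neg (by simp; omega), if_neg (by simp; omega)]
  constructor <;> ring
end
end
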